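/- Suppose there exists α* > 1 such that for every symmetric real matrix A with nonnegative entries and at most one positive eigenvalue, the entrywise power A^{∘α*} also has nonnegative entries and at most one positive eigenvalue. Then the same closure property holds for every α > 1. -/

import Mathlib

open Finset

/-- Membership in the class 𝒜: real symmetric matrices with nonnegative entries
and at most one positive eigenvalue. -/
def MemA {n : ℕ} (A : Matrix (Fin n) (Fin n) ℝ) : Prop :=
  ∃ hA : A.IsHermitian, (∀ i j, 0 ≤ A i j) ∧
    (Finset.univ.filter fun i => 0 < hA.eigenvalues i).card ≤ 1

/-- Entrywise (Hadamard) real power of a matrix. -/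
noncomputable def hadamardPow {n : ℕ} (A : Matrix (Fin n) (Fin n) ℝ) (α : ℝ) :
    Matrix (Fin n) (Fin n) ℝ :=
  Matrix.of fun i j => (A i j) ^ α

/-!
Entrywise powers compose, so if `α ≤ α* ^ k` then `A^{∘α} = (A^{∘α*^k})^{∘t}` with
`t = α / α* ^ k ∈ (0, 1]`, and it suffices that `𝒜` is closed under entrywise powers with exponent
in `(0, 1)`.

A matrix `A ∈ 𝒜` is negative semidefinite on the hyperplane orthogonal to its nonnegative Perron
vector `v` and vanishes outside the support of `v`; conversely, negativity on any hyperplane leaves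
room for at most one positive eigenvalue. Dividing by `v i * v j` turns `A` into a conditionally
negative semidefinite matrix `B` (negative on `∑ x = 0`). By Schoenberg's theorem `exp (-s B)` is
positive semidefinite for `s ≥ 0`, and since `b ^ t` is a positive multiple of
`∫₀^∞ (1 - exp (-s b)) s ^ (-1 - t) ds`, the matrix `B^{∘t}` is again conditionally negative
semidefinite. Multiplying back by `v i ^ t * v j ^ t` shows `A^{∘t} ∈ 𝒜`.
-/

open Matrix MeasureTheory

variable {ι κ : Type*} [Fintype ι] [Fintype κ]

def NegSemidefOnOrth (A : Matrix ι ι ℝ) (v : ι → ℝ) : Prop :=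
  ∀ x, x ⬝ᵥ v = 0 → x ⬝ᵥ A *ᵥ x ≤ 0

namespace NegSemidefOnOrth

variable {A : Matrix ι ι ℝ} {v : ι → ℝ}

lemma submatrix [DecidableEq ι] (h : NegSemidefOnOrth A v) (e : κ → ι) :
    NegSemidefOnOrth (A.submatrix e e) (v ∘ e) := by
  intro x hx
  set y : ι → ℝ := ∑ k, x k • Pi.single (e k) 1
  have hy : y ⬝ᵥ v = x ⬝ᵥ (v ∘ e) := by
    simp only [y, sum_dotProduct, smul_dotProduct, single_dotProduct, one_mul, smul_eq_mul]
    rfl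
  have hyA : y ⬝ᵥ A *ᵥ y = x ⬝ᵥ A.submatrix e e *ᵥ x := by
    simp only [y, mulVec_sum, mulVec_smul, mulVec_single_one, sum_dotProduct, dotProduct_sum,
      smul_dotProduct, dotProduct_smul, single_dotProduct, smul_eq_mul, one_mul]
    simp only [dotProduct, mulVec, col_apply, submatrix_apply, mul_sum]
    rw [sum_comm]
    exact sum_congr rfl fun k _ => sum_congr rfl fun l _ => by ring
  rw [← hyA]
  exact h y (hy.trans hx)

lemma hadamard_vecMulVec (h : NegSemidefOnOrth A v) (d : ι → ℝ) :
    NegSemidefOnOrth (A ⊙ vecMulVec d d) (d * v) := by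
  intro x hx
  have hdx : (d * x) ⬝ᵥ v = 0 := by
    rw [← hx]; simp only [dotProduct, Pi.mul_apply]; exact sum_congr rfl fun i _ => by ring
  convert h (d * x) hdx using 1
  simp only [dotProduct, mulVec, hadamard_apply, vecMulVec_apply, Pi.mul_apply, mul_sum]
  exact sum_congr rfl fun i _ => sum_congr rfl fun j _ => by ring

lemma apply_eq_zero [DecidableEq ι] (hnonneg : ∀ i j, 0 ≤ A i j) (h : NegSemidefOnOrth A v)
    {i j : ι} (hi : v i = 0) (hj : v j = 0) : A i j = 0 := by
  have hdiag : ∀ k, v k = 0 → A k k = 0 := fun k hk =>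
    le_antisymm (by simpa [single_dotProduct, hk] using h (Pi.single k 1)) (hnonneg k k)
  have := h (Pi.single i 1 + Pi.single j 1) (by simp [add_dotProduct, single_dotProduct, hi, hj])
  simp [add_dotProduct, dotProduct_add, mulVec_add, single_dotProduct, hdiag i hi,
    hdiag j hj] at this
  linarith [hnonneg i j, hnonneg j i]

end NegSemidefOnOrth

lemma Matrix.dotProduct_mulVec_self_le_abs {A : Matrix ι ι ℝ} (hnonneg : ∀ i j, 0 ≤ A i j)
    (x : ι → ℝ) : x ⬝ᵥ A *ᵥ x ≤ |x| ⬝ᵥ A *ᵥ |x| := by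
  simp only [dotProduct, mulVec, mul_sum, Pi.abs_apply]
  refine sum_le_sum fun i _ => sum_le_sum fun j _ => ?_
  calc x i * (A i j * x j) ≤ |x i * (A i j * x j)| := le_abs_self _
    _ = |x i| * (A i j * |x j|) := by rw [abs_mul, abs_mul, abs_of_nonneg (hnonneg i j)]

namespace Matrix.IsHermitian

variable [DecidableEq ι] {A : Matrix ι ι ℝ} (hA : A.IsHermitian)

lemma eigenvectorBasis_dotProduct (k l : ι) :
    ⇑(hA.eigenvectorBasis k) ⬝ᵥ ⇑(hA.eigenvectorBasis l) = if k = l then 1 else 0 := by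
  simpa [EuclideanSpace.inner_eq_star_dotProduct, eq_comm] using
    orthonormal_iff_ite.mp hA.eigenvectorBasis.orthonormal l k

lemma sum_dotProduct_smul_eigenvectorBasis (x : ι → ℝ) :
    ∑ k, (⇑(hA.eigenvectorBasis k) ⬝ᵥ x) • ⇑(hA.eigenvectorBasis k) = x := by
  simpa [EuclideanSpace.inner_eq_star_dotProduct, dotProduct_comm] using
    congrArg WithLp.ofLp (hA.eigenvectorBasis.sum_repr' (WithLp.toLp 2 x))

lemma dotProduct_mulVec_self_eq_sum (x : ι → ℝ) :
    x ⬝ᵥ A *ᵥ x = ∑ k, hA.eigenvalues k * (⇑(hA.eigenvectorBasis k) ⬝ᵥ x) ^ 2 := by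
  conv_lhs => arg 2; rw [← hA.sum_dotProduct_smul_eigenvectorBasis x]
  simp only [mulVec_sum, mulVec_smul, hA.mulVec_eigenvectorBasis, dotProduct_sum, dotProduct_smul,
    smul_eq_mul]
  exact sum_congr rfl fun k _ => by rw [dotProduct_comm x]; ring

lemma dotProduct_self_eq_sum (x : ι → ℝ) :
    x ⬝ᵥ x = ∑ k, (⇑(hA.eigenvectorBasis k) ⬝ᵥ x) ^ 2 := by
  conv_lhs => arg 1; rw [← hA.sum_dotProduct_smul_eigenvectorBasis x]
  simp only [sum_dotProduct, smul_dotProduct, smul_eq_mul, sq]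

lemma dotProduct_mulVec_smul_add_smul {k l : ι} (hkl : k ≠ l) (a c : ℝ) :
    (a • ⇑(hA.eigenvectorBasis k) + c • ⇑(hA.eigenvectorBasis l)) ⬝ᵥ
      A *ᵥ (a • ⇑(hA.eigenvectorBasis k) + c • ⇑(hA.eigenvectorBasis l)) =
      hA.eigenvalues k * a ^ 2 + hA.eigenvalues l * c ^ 2 := by
  simp only [mulVec_add, mulVec_smul, hA.mulVec_eigenvectorBasis, add_dotProduct, dotProduct_add,
    smul_dotProduct, dotProduct_smul, hA.eigenvectorBasis_dotProduct, hkl, hkl.symm, if_true,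
    if_false, smul_eq_mul]
  ring

lemma card_filter_eigenvalues_pos_le_one {v : ι → ℝ} (h : NegSemidefOnOrth A v) :
    #{k | 0 < hA.eigenvalues k} ≤ 1 := by
  refine card_le_one.mpr fun k hk l hl => by_contra fun hkl => ?_
  simp only [mem_filter, mem_univ, true_and] at hk hl
  set p := ⇑(hA.eigenvectorBasis k) ⬝ᵥ v
  set r := ⇑(hA.eigenvectorBasis l) ⬝ᵥ v
  -- a nonzero vector of the plane spanned by the two eigenvectors, orthogonal to `v`
  obtain ⟨a, c, hac, horth⟩ : ∃ a c : ℝ, (a ≠ 0 ∨ c ≠ 0) ∧ a * p + c * r = 0 := by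
    by_cases hr : r = 0
    · exact ⟨0, 1, Or.inr one_ne_zero, by simp [hr]⟩
    · exact ⟨r, -p, Or.inl hr, by ring⟩
  have := h (a • ⇑(hA.eigenvectorBasis k) + c • ⇑(hA.eigenvectorBasis l))
    (by simpa [add_dotProduct, smul_dotProduct] using horth)
  rw [hA.dotProduct_mulVec_smul_add_smul hkl] at this
  rcases hac with ha | hc
  · nlinarith [sq_pos_of_ne_zero ha, sq_nonneg c]
  · nlinarith [sq_pos_of_ne_zero hc, sq_nonneg a]

lemma dotProduct_mulVec_self_nonpos_of_orthogonal (k : ι) (hk : ∀ m ≠ k, hA.eigenvalues m ≤ 0)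
    {x : ι → ℝ} (hx : x ⬝ᵥ ⇑(hA.eigenvectorBasis k) = 0) : x ⬝ᵥ A *ᵥ x ≤ 0 := by
  rw [hA.dotProduct_mulVec_self_eq_sum]
  refine sum_nonpos fun m _ => ?_
  by_cases hm : m = k
  · simp [hm, dotProduct_comm, hx]
  · exact mul_nonpos_of_nonpos_of_nonneg (hk m hm) (sq_nonneg _)

lemma dotProduct_mulVec_self_nonpos (h : ∀ m, hA.eigenvalues m ≤ 0) (x : ι → ℝ) :
    x ⬝ᵥ A *ᵥ x ≤ 0 := by
  rw [hA.dotProduct_mulVec_self_eq_sum]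
  exact sum_nonpos fun m _ => mul_nonpos_of_nonpos_of_nonneg (h m) (sq_nonneg _)

lemma eq_smul_eigenvectorBasis_of_le (k : ι) (hk : ∀ m ≠ k, hA.eigenvalues m < hA.eigenvalues k)
    {x : ι → ℝ} (hx : hA.eigenvalues k * (x ⬝ᵥ x) ≤ x ⬝ᵥ A *ᵥ x) :
    x = (⇑(hA.eigenvectorBasis k) ⬝ᵥ x) • ⇑(hA.eigenvectorBasis k) := by
  set c : ι → ℝ := fun m => ⇑(hA.eigenvectorBasis m) ⬝ᵥ x
  have hterm : ∀ m ∈ univ, (hA.eigenvalues m - hA.eigenvalues k) * c m ^ 2 ≤ 0 := fun m _ =>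
    mul_nonpos_of_nonpos_of_nonneg
      (sub_nonpos.mpr (by rcases eq_or_ne m k with rfl | hm; exacts [le_rfl, (hk m hm).le]))
      (sq_nonneg _)
  have hsum : ∑ m, (hA.eigenvalues m - hA.eigenvalues k) * c m ^ 2 = 0 := by
    refine le_antisymm (sum_nonpos hterm) ?_
    rw [hA.dotProduct_self_eq_sum, mul_sum, hA.dotProduct_mulVec_self_eq_sum] at hx
    simpa [sub_mul, sum_sub_distrib] using hx
  have hc : ∀ m ≠ k, c m = 0 := fun m hm => by
    have := (sum_eq_zero_iff_of_nonpos hterm).mp hsum m (mem_univ m)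
    exact pow_eq_zero_iff two_ne_zero |>.mp <|
      (mul_eq_zero.mp this).resolve_left (sub_ne_zero.mpr (hk m hm).ne)
  conv_lhs => rw [← hA.sum_dotProduct_smul_eigenvectorBasis x]
  exact sum_eq_single k (fun m _ hm => by rw [show _ ⬝ᵥ x = 0 from hc m hm, zero_smul]) (by simp)

lemma abs_eigenvectorBasis_eq_smul (hnonneg : ∀ i j, 0 ≤ A i j) (k : ι)
    (hk : ∀ m ≠ k, hA.eigenvalues m < hA.eigenvalues k) :
    |⇑(hA.eigenvectorBasis k)| =
      (⇑(hA.eigenvectorBasis k) ⬝ᵥ |⇑(hA.eigenvectorBasis k)|) • ⇑(hA.eigenvectorBasis k) := by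
  refine hA.eq_smul_eigenvectorBasis_of_le k hk ?_
  have hunit := hA.eigenvectorBasis_dotProduct k k
  rw [if_pos rfl] at hunit
  have habs : |⇑(hA.eigenvectorBasis k)| ⬝ᵥ |⇑(hA.eigenvectorBasis k)| = 1 := by
    rw [← hunit]; simp only [dotProduct, Pi.abs_apply, abs_mul_abs_self]
  calc hA.eigenvalues k * (|⇑(hA.eigenvectorBasis k)| ⬝ᵥ |⇑(hA.eigenvectorBasis k)|)
      = ⇑(hA.eigenvectorBasis k) ⬝ᵥ A *ᵥ ⇑(hA.eigenvectorBasis k) := by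
        rw [habs, hA.mulVec_eigenvectorBasis, dotProduct_smul, smul_eq_mul, hunit]
    _ ≤ _ := dotProduct_mulVec_self_le_abs hnonneg _

end Matrix.IsHermitian

lemma Matrix.PosSemidef.map_pow {C : Matrix ι ι ℝ} (hC : C.PosSemidef) (m : ℕ) :
    (C.map (· ^ m)).PosSemidef := by
  induction m with
  | zero =>
    have : C.map (· ^ 0) = vecMulVec 1 (star 1) := by ext; simp
    rw [this]; exact posSemidef_vecMulVec_self_star 1
  | succ m ih =>
    have : C.map (· ^ (m + 1)) = C.map (· ^ m) ⊙ C := by ext; simp [pow_succ]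
    rw [this]; exact ih.hadamard hC

lemma Matrix.PosSemidef.map_exp {C : Matrix ι ι ℝ} (hC : C.PosSemidef) :
    (C.map Real.exp).PosSemidef := by
  refine .of_dotProduct_mulVec_nonneg (hC.isHermitian.map _ fun _ => rfl) fun x => ?_
  have hexp : ∀ c : ℝ, HasSum (fun m : ℕ => c ^ m / m.factorial) (Real.exp c) := fun c => by
    rw [Real.exp_eq_exp_ℝ]; exact NormedSpace.expSeries_div_hasSum_exp c
  have hsum : HasSum (fun m : ℕ => ∑ i, ∑ j, x i * (C i j ^ m / m.factorial * x j))
      (star x ⬝ᵥ C.map Real.exp *ᵥ x) := by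
    simp only [star_trivial, dotProduct, mulVec, map_apply, mul_sum]
    exact hasSum_sum fun i _ => hasSum_sum fun j _ => ((hexp _).mul_right _).mul_left _
  refine hsum.nonneg fun m => ?_
  have hm : (0 : ℝ) ≤ (m.factorial : ℝ)⁻¹ := by positivity
  convert ((hC.map_pow m).smul hm).dotProduct_mulVec_nonneg x using 1
  simp only [star_trivial, dotProduct, mulVec, map_apply, smul_apply, smul_eq_mul, mul_sum]
  exact sum_congr rfl fun i _ => sum_congr rfl fun j _ => by ring

lemma NegSemidefOnOrth.posSemidef_centered [DecidableEq ι] {B : Matrix ι ι ℝ} (hB : B.IsHermitian)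
    (h : NegSemidefOnOrth B 1) (i₀ : ι) :
    (of fun i j => B i i₀ + B j i₀ - B i j - B i₀ i₀).PosSemidef := by
  have hsymm : ∀ i j, B j i = B i j := fun i j => by simpa using hB.apply i j
  refine .of_dotProduct_mulVec_nonneg (by ext i j; simp [hsymm]; ring) fun y => ?_
  set σ := y ⬝ᵥ 1
  have hCy : (of fun i j => B i i₀ + B j i₀ - B i j - B i₀ i₀) *ᵥ y =
      σ • B.col i₀ + (B.col i₀ ⬝ᵥ y) • 1 - B *ᵥ y - (B i₀ i₀ * σ) • 1 := by
    ext i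
    simp only [mulVec, dotProduct, of_apply, col_apply, Pi.add_apply, Pi.sub_apply, Pi.smul_apply,
      Pi.one_apply, smul_eq_mul, mul_one, sub_mul, add_mul, sum_add_distrib, sum_sub_distrib,
      ← mul_sum, σ]
    ring
  have hBy : (B *ᵥ y) i₀ = B.col i₀ ⬝ᵥ y := by
    simp only [mulVec, dotProduct, col_apply, hsymm]
  -- the quadratic form of the centered matrix at `y` is minus that of `B` at `y - (∑ y) eᵢ₀`
  have hx := h (y - σ • Pi.single i₀ 1) (by simp [sub_dotProduct, single_dotProduct, σ])
  simp only [mulVec_sub, mulVec_smul, mulVec_single_one, sub_dotProduct, dotProduct_sub,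
    smul_dotProduct, dotProduct_smul, single_dotProduct, smul_eq_mul, one_mul, hBy,
    col_apply, dotProduct_comm y (B.col i₀)] at hx
  rw [star_trivial, hCy]
  simp only [dotProduct_sub, dotProduct_add, dotProduct_smul, smul_eq_mul,
    dotProduct_comm y (B.col i₀)]
  linarith

lemma NegSemidefOnOrth.posSemidef_map_exp_neg [DecidableEq ι] {B : Matrix ι ι ℝ}
    (hB : B.IsHermitian) (h : NegSemidefOnOrth B 1) {s : ℝ} (hs : 0 ≤ s) :
    (B.map fun b => Real.exp (-(s * b))).PosSemidef := by
  cases isEmpty_or_nonempty ι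
  · rw [Subsingleton.elim (B.map _) 0]; exact .zero
  obtain ⟨i₀⟩ := ‹Nonempty ι›
  set d : ι → ℝ := fun i => Real.exp (-(s * B i i₀))
  have hfactor : B.map (fun b => Real.exp (-(s * b))) = Real.exp (s * B i₀ i₀) •
      ((s • of fun i j => B i i₀ + B j i₀ - B i j - B i₀ i₀).map Real.exp ⊙
        vecMulVec d (star d)) := by
    ext i j
    simp only [map_apply, Matrix.smul_apply, hadamard_apply, vecMulVec_apply, of_apply,
      star_trivial, smul_eq_mul, d, ← Real.exp_add]
    ring_nf
  rw [hfactor]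
  exact (((h.posSemidef_centered hB i₀).smul hs).map_exp.hadamard
    (posSemidef_vecMulVec_self_star d)).smul (Real.exp_pos _).le

section

open Set

lemma integrableOn_one_sub_exp_mul_rpow {t : ℝ} (ht0 : 0 < t) (ht1 : t < 1) {b : ℝ} (hb : 0 ≤ b) :
    IntegrableOn (fun s => (1 - Real.exp (-(s * b))) * s ^ (-1 - t)) (Ioi 0) := by
  have hcont : ContinuousOn (fun s : ℝ => (1 - Real.exp (-(s * b))) * s ^ (-1 - t)) (Ioi 0) :=
    (by fun_prop : Continuous fun s : ℝ => 1 - Real.exp (-(s * b))).continuousOn.mul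
      fun s hs => (Real.continuousAt_rpow_const s _ (Or.inl hs.ne')).continuousWithinAt
  have hnorm : ∀ s ∈ Ioi (0 : ℝ),
      ‖(1 - Real.exp (-(s * b))) * s ^ (-1 - t)‖ = (1 - Real.exp (-(s * b))) * s ^ (-1 - t) :=
    fun s hs => Real.norm_of_nonneg <| mul_nonneg
      (sub_nonneg.mpr (Real.exp_le_one_iff.mpr (by nlinarith [mem_Ioi.mp hs])))
      (Real.rpow_nonneg (le_of_lt hs) _)
  rw [← Ioc_union_Ioi_eq_Ioi zero_le_one]
  refine IntegrableOn.union ?_ ?_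
  · have hg : IntegrableOn (fun s : ℝ => b * s ^ (-t)) (Ioc 0 1) :=
      ((integrableOn_Ioc_iff_integrableOn_Ioo).mpr
        ((intervalIntegral.integrableOn_Ioo_rpow_iff one_pos).mpr (by linarith))).const_mul b
    refine hg.mono' ((hcont.mono Ioc_subset_Ioi_self).aestronglyMeasurable measurableSet_Ioc) ?_
    refine (ae_restrict_iff' measurableSet_Ioc).mpr (.of_forall fun s hs => ?_)
    rw [hnorm s hs.1]
    calc (1 - Real.exp (-(s * b))) * s ^ (-1 - t) ≤ s * b * s ^ (-1 - t) :=
          mul_le_mul_of_nonneg_right (by linarith [Real.add_one_le_exp (-(s * b))])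
            (Real.rpow_nonneg hs.1.le _)
      _ = b * s ^ (-t) := by
          rw [mul_comm s, mul_assoc, ← Real.rpow_one_add' hs.1.le (by linarith)]; ring_nf
  · refine (integrableOn_Ioi_rpow_of_lt (show -1 - t < -1 by linarith) zero_lt_one).mono'
      ((hcont.mono (Ioi_subset_Ioi zero_le_one)).aestronglyMeasurable measurableSet_Ioi) ?_
    refine (ae_restrict_iff' measurableSet_Ioi).mpr (.of_forall fun s hs => ?_)
    have hs0 : (0 : ℝ) < s := zero_lt_one.trans hs
    rw [hnorm s hs0]
    exact mul_le_of_le_one_left (Real.rpow_nonneg hs0.le _)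
      (by linarith [Real.exp_pos (-(s * b))])

lemma integral_one_sub_exp_mul_rpow {t : ℝ} (ht0 : 0 < t) {b : ℝ} (hb : 0 ≤ b) :
    ∫ s in Ioi 0, (1 - Real.exp (-(s * b))) * s ^ (-1 - t) =
      b ^ t * ∫ s in Ioi 0, (1 - Real.exp (-s)) * s ^ (-1 - t) := by
  rcases hb.eq_or_lt with rfl | hb
  · simp [Real.zero_rpow ht0.ne']
  have hscale : ∀ s ∈ Ioi (0 : ℝ), (1 - Real.exp (-(s * b))) * s ^ (-1 - t) =
      b ^ (1 + t) * ((1 - Real.exp (-(b * s))) * (b * s) ^ (-1 - t)) := by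
    intro s hs
    have hb1 : b ^ (1 + t) * b ^ (-1 - t) = 1 := by rw [← Real.rpow_add hb]; simp
    rw [Real.mul_rpow hb.le (le_of_lt hs), mul_comm s b]
    linear_combination -((1 - Real.exp (-(b * s))) * s ^ (-1 - t)) * hb1
  have hsub := integral_comp_mul_left_Ioi (fun u => (1 - Real.exp (-u)) * u ^ (-1 - t)) 0 hb
  rw [setIntegral_congr_fun measurableSet_Ioi hscale, integral_const_mul, hsub, mul_zero,
    smul_eq_mul, Real.rpow_add hb, Real.rpow_one]
  field_simp

lemma integral_one_sub_exp_rpow_pos {t : ℝ} (ht0 : 0 < t) (ht1 : t < 1) :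
    0 < ∫ s in Ioi 0, (1 - Real.exp (-s)) * s ^ (-1 - t) := by
  have hint := integrableOn_one_sub_exp_mul_rpow ht0 ht1 zero_le_one
  simp only [mul_one] at hint
  have hpos : ∀ s ∈ Ioi (0 : ℝ), 0 < (1 - Real.exp (-s)) * s ^ (-1 - t) := fun s hs =>
    mul_pos (sub_pos.mpr (Real.exp_lt_one_iff.mpr (neg_lt_zero.mpr hs))) (Real.rpow_pos_of_pos hs _)
  have hsupp : Set.Ioi (0 : ℝ) ⊆ Function.support fun s => (1 - Real.exp (-s)) * s ^ (-1 - t) :=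
    fun s hs => (hpos s hs).ne'
  rw [setIntegral_pos_iff_support_of_nonneg_ae
    ((ae_restrict_iff' measurableSet_Ioi).mpr (.of_forall fun s hs => (hpos s hs).le)) hint,
    inter_eq_self_of_subset_right hsupp, Real.volume_Ioi]
  exact ENNReal.zero_lt_top

lemma NegSemidefOnOrth.map_rpow_of_one [DecidableEq ι] {B : Matrix ι ι ℝ} (hB : B.IsHermitian)
    (hBnonneg : ∀ i j, 0 ≤ B i j) (h : NegSemidefOnOrth B 1) {t : ℝ} (ht0 : 0 < t) (ht1 : t < 1) :
    NegSemidefOnOrth (B.map (· ^ t)) 1 := by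
  intro x hx
  set κ := ∫ s in Ioi 0, (1 - Real.exp (-s)) * s ^ (-1 - t)
  set F : ℝ → ι → ι → ℝ := fun s i j => x i * ((1 - Real.exp (-(s * B i j))) * s ^ (-1 - t)) * x j
  have hF : ∀ i j, IntegrableOn (F · i j) (Ioi 0) := fun i j =>
    ((integrableOn_one_sub_exp_mul_rpow ht0 ht1 (hBnonneg i j)).const_mul _).mul_const _
  have hxx : ∑ i, ∑ j, x i * x j = 0 := by
    rw [← sum_mul_sum]; simp_all [dotProduct]
  refine nonpos_of_mul_nonpos_left ?_ (integral_one_sub_exp_rpow_pos ht0 ht1)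
  calc x ⬝ᵥ B.map (· ^ t) *ᵥ x * κ = ∑ i, ∑ j, ∫ s in Ioi 0, F s i j := by
        simp only [dotProduct, mulVec, map_apply, sum_mul, mul_sum]
        refine sum_congr rfl fun i _ => sum_congr rfl fun j _ => ?_
        rw [integral_mul_const, integral_const_mul,
          integral_one_sub_exp_mul_rpow ht0 (hBnonneg i j)]
        ring
    _ = ∫ s in Ioi 0, ∑ i, ∑ j, F s i j := by
        rw [integral_finsetSum _ fun i _ => integrable_finsetSum _ fun j _ => hF i j]
        exact sum_congr rfl fun i _ => (integral_finsetSum _ fun j _ => hF i j).symm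
    _ = ∫ s in Ioi 0, -(x ⬝ᵥ B.map (fun b => Real.exp (-(s * b))) *ᵥ x) * s ^ (-1 - t) := by
        refine setIntegral_congr_fun measurableSet_Ioi fun s _ => ?_
        calc ∑ i, ∑ j, F s i j = s ^ (-1 - t) * ∑ i, ∑ j, x i * x j -
            s ^ (-1 - t) * (x ⬝ᵥ B.map (fun b => Real.exp (-(s * b))) *ᵥ x) := by
              simp only [F, dotProduct, mulVec, map_apply, mul_sum, ← sum_sub_distrib]
              exact sum_congr rfl fun i _ => sum_congr rfl fun j _ => by ring
          _ = _ := by rw [hxx]; ring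
    _ ≤ 0 := setIntegral_nonpos measurableSet_Ioi fun s hs =>
        mul_nonpos_of_nonpos_of_nonneg
          (neg_nonpos.mpr (by simpa using
            (h.posSemidef_map_exp_neg hB (le_of_lt hs)).dotProduct_mulVec_nonneg x))
          (Real.rpow_nonneg (le_of_lt hs) _)

end

lemma NegSemidefOnOrth.map_rpow [DecidableEq ι] {A : Matrix ι ι ℝ} {v : ι → ℝ}
    (hA : A.IsHermitian) (hnonneg : ∀ i j, 0 ≤ A i j) (hv : 0 ≤ v)
    (hsupp : ∀ i j, v i = 0 → A i j = 0) (h : NegSemidefOnOrth A v) {t : ℝ} (ht0 : 0 < t)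
    (ht1 : t < 1) : NegSemidefOnOrth (A.map (· ^ t)) (fun i => v i ^ t) := by
  have hsymm : ∀ i j, A j i = A i j := fun i j => by simpa using hA.apply i j
  have hzero : ∀ i j, v i = 0 ∨ v j = 0 → A i j = 0 := by
    rintro i j (hi | hj)
    exacts [hsupp i j hi, hsymm i j ▸ hsupp j i hj]
  by_cases hv0 : ∀ i, v i = 0
  · intro x _
    have : A.map (· ^ t) = 0 := by
      ext i j; simp [hsupp i j (hv0 i), Real.zero_rpow ht0.ne']
    simp [this]
  obtain ⟨i₀, hi₀⟩ := not_forall.mp hv0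
  -- `π` folds the zeros of `v` onto `i₀`, so that `B` below is conditionally negative on all of `ι`
  set π : ι → ι := fun i => if v i = 0 then i₀ else i
  have hπ : ∀ i, v (π i) ≠ 0 := fun i => by by_cases hi : v i = 0 <;> simp [π, hi, hi₀]
  set B := (A ⊙ vecMulVec v⁻¹ v⁻¹).submatrix π π
  have hB : NegSemidefOnOrth B 1 := by
    convert (h.hadamard_vecMulVec v⁻¹).submatrix π
    ext i; simp [hπ i]
  have hBsymm : B.IsHermitian := by
    ext i j; simp [B, hsymm, vecMulVec_apply, mul_comm]
  have hBnonneg : ∀ i j, 0 ≤ B i j := fun i j => by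
    simpa [B, vecMulVec_apply] using
      mul_nonneg (hnonneg _ _) (mul_nonneg (inv_nonneg.mpr (hv _)) (inv_nonneg.mpr (hv _)))
  have hfactor :
      A.map (· ^ t) = B.map (· ^ t) ⊙ vecMulVec (fun i => v i ^ t) (fun i => v i ^ t) := by
    ext i j
    by_cases hij : v i = 0 ∨ v j = 0
    · rcases hij with hi | hj
      · simp [hzero i j (.inl hi), hi, vecMulVec_apply, Real.zero_rpow ht0.ne']
      · simp [hzero i j (.inr hj), hj, vecMulVec_apply, Real.zero_rpow ht0.ne']
    · obtain ⟨hi, hj⟩ := not_or.mp hij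
      have hvi : 0 < v i := (hv i).lt_of_ne' hi
      have hvj : 0 < v j := (hv j).lt_of_ne' hj
      simp only [map_apply, hadamard_apply, vecMulVec_apply, B, submatrix_apply, π, hi, hj,
        if_false, Pi.inv_apply]
      rw [Real.mul_rpow (hnonneg i j) (by positivity),
        Real.mul_rpow (by positivity) (by positivity), Real.inv_rpow hvi.le, Real.inv_rpow hvj.le]
      have := Real.rpow_pos_of_pos hvi t
      have := Real.rpow_pos_of_pos hvj t
      field_simp
  rw [hfactor]
  simpa using (hB.map_rpow_of_one hBsymm hBnonneg ht0 ht1).hadamard_vecMulVec (fun i => v i ^ t)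

lemma hadamardPow_one {n : ℕ} (A : Matrix (Fin n) (Fin n) ℝ) : hadamardPow A 1 = A := by
  ext; simp [hadamardPow]

lemma hadamardPow_hadamardPow {n : ℕ} {A : Matrix (Fin n) (Fin n) ℝ}
    (hnonneg : ∀ i j, 0 ≤ A i j) (a b : ℝ) :
    hadamardPow (hadamardPow A a) b = hadamardPow A (a * b) := by
  ext; simp [hadamardPow, Real.rpow_mul (hnonneg _ _)]

namespace MemA

variable {n : ℕ} {A : Matrix (Fin n) (Fin n) ℝ}

-- the Perron vector of `A` when it has a positive eigenvalue, and `0` otherwise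
lemma exists_weight (h : MemA A) :
    ∃ v, 0 ≤ v ∧ (∀ i j, v i = 0 → A i j = 0) ∧ NegSemidefOnOrth A v := by
  obtain ⟨hA, hnonneg, hcard⟩ := h
  by_cases hex : ∃ k, 0 < hA.eigenvalues k
  swap
  · have hneg : NegSemidefOnOrth A 0 := fun x _ =>
      hA.dotProduct_mulVec_self_nonpos (fun m => not_lt.mp fun hm => hex ⟨m, hm⟩) x
    exact ⟨0, le_rfl, fun i j hi => hneg.apply_eq_zero hnonneg hi rfl, hneg⟩
  obtain ⟨k, hk⟩ := hex
  have hdom : ∀ m ≠ k, hA.eigenvalues m ≤ 0 := fun m hm => not_lt.mp fun hm' =>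
    hm (card_le_one.mp hcard m (by simpa using hm') k (by simpa using hk))
  have hb := hA.abs_eigenvectorBasis_eq_smul hnonneg k fun m hm => (hdom m hm).trans_lt hk
  have hunit := hA.eigenvectorBasis_dotProduct k k
  set b : Fin n → ℝ := ⇑(hA.eigenvectorBasis k)
  have hc : b ⬝ᵥ |b| ≠ 0 := fun hc => by
    have hb0 : |b| = 0 := by rw [hb, hc, zero_smul]
    have : b = 0 := funext fun i => abs_eq_zero.mp (congrFun hb0 i)
    simp [this] at hunit
  have hneg : NegSemidefOnOrth A |b| := fun x hx => by
    rw [hb, dotProduct_smul, smul_eq_mul] at hx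
    exact hA.dotProduct_mulVec_self_nonpos_of_orthogonal k hdom
      ((mul_eq_zero.mp hx).resolve_left hc)
  have heig : A *ᵥ |b| = hA.eigenvalues k • |b| := by
    rw [hb, mulVec_smul, hA.mulVec_eigenvectorBasis, smul_comm]
  refine ⟨|b|, abs_nonneg b, fun i j hi => ?_, hneg⟩
  by_cases hj : |b| j = 0
  · exact hneg.apply_eq_zero hnonneg hi hj
  · have hrow : ∑ l, A i l * |b| l = 0 := by
      simpa [hi, mulVec, dotProduct] using congrFun heig i
    have := (sum_eq_zero_iff_of_nonneg fun l _ => mul_nonneg (hnonneg i l) (abs_nonneg (b l))).mp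
      hrow j (mem_univ j)
    exact (mul_eq_zero.mp this).resolve_right hj

lemma hadamardPow_of_le_one (h : MemA A) {t : ℝ} (ht0 : 0 < t) (ht1 : t ≤ 1) :
    MemA (hadamardPow A t) := by
  rcases ht1.lt_or_eq with ht1 | rfl
  · obtain ⟨v, hv, hsupp, hneg⟩ := h.exists_weight
    obtain ⟨hA, hnonneg, -⟩ := h
    have hAt : (A.map (· ^ t)).IsHermitian := hA.map _ fun _ => rfl
    exact ⟨hAt, fun i j => Real.rpow_nonneg (hnonneg i j) t,
      hAt.card_filter_eigenvalues_pos_le_one (hneg.map_rpow hA hnonneg hv hsupp ht0 ht1)⟩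
  · rwa [hadamardPow_one]

lemma hadamardPow_pow {a : ℝ}
    (hclosed : ∀ (n : ℕ) (A : Matrix (Fin n) (Fin n) ℝ), MemA A → MemA (hadamardPow A a))
    (h : MemA A) (k : ℕ) : MemA (hadamardPow A (a ^ k)) := by
  induction k with
  | zero => rwa [pow_zero, hadamardPow_one]
  | succ k ih =>
    obtain ⟨-, hnonneg, -⟩ := h
    rw [pow_succ, ← hadamardPow_hadamardPow hnonneg]
    exact hclosed n _ ih

end MemA

/-- if the class 𝒜 is closed under the entrywise power with some
exponent `α* > 1`, then it is closed under the entrywise power with every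
exponent `α > 1`. -/
theorem hadamard_pow_closure_extends (αstar : ℝ) (hαstar : 1 < αstar)
    (hclosed : ∀ (n : ℕ) (A : Matrix (Fin n) (Fin n) ℝ), MemA A → MemA (hadamardPow A αstar)) :
    ∀ (α : ℝ), 1 < α →
      ∀ (n : ℕ) (A : Matrix (Fin n) (Fin n) ℝ), MemA A → MemA (hadamardPow A α) := by
  intro α hα n A hA
  obtain ⟨k, hk⟩ := pow_unbounded_of_one_lt α hαstar
  have hpow : 0 < αstar ^ k := by positivity
  have hdown := (hA.hadamardPow_pow hclosed k).hadamardPow_of_le_one (div_pos (by linarith) hpow)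
    ((div_le_one hpow).mpr hk.le)
  obtain ⟨-, hnonneg, -⟩ := hA
  rwa [hadamardPow_hadamardPow hnonneg, mul_div_cancel₀ _ hpow.ne'] at hdown
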